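/- If σ is a 4-fold twist preserving the cubic tessellation of ℝ³, then its axis is parallel to a coordinate axis and the norm of its translational component is a positive integer. -/

import Mathlib

noncomputable section
open scoped RealInnerProductSpace

abbrev E3 : Type := EuclideanSpace ℝ (Fin 3)

def vec (x y z : ℝ) : E3 := (WithLp.equiv 2 (Fin 3 → ℝ)).symm ![x, y, z]

/-- The vertex set of the cubic tessellation: the integer lattice ℤ³. -/
def latt : Set E3 := {p | ∀ i, ∃ n : ℤ, p i = (n : ℝ)}

/-- An isometry belongs to the symmetry group [4,3,4] of the cubic tessellation
iff it preserves the integer lattice. -/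
def PreservesLatt (f : E3 ≃ᵢ E3) : Prop := ∀ p : E3, p ∈ latt ↔ f p ∈ latt

/-- `f` is a rotation of order `n` about the line through `p` with direction `v`:
it fixes the line pointwise and has order `n` in the isometry group. -/
def IsRotationAbout (f : E3 ≃ᵢ E3) (p v : E3) (n : ℕ) : Prop :=
  v ≠ 0 ∧ (∀ t : ℝ, f (p + t • v) = p + t • v) ∧ orderOf f = n

/-- `f` is a twist (screw motion): the commuting product of a rotation `r` of order `n ≥ 2`
about the line through `p` in direction `v` with the translation by `w ≠ 0`, `w` parallel to `v`. -/
def IsTwist (f : E3 ≃ᵢ E3) (p v w : E3) (n : ℕ) : Prop :=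
  2 ≤ n ∧ w ≠ 0 ∧ (∃ s : ℝ, w = s • v) ∧
  ∃ r : E3 ≃ᵢ E3, IsRotationAbout r p v n ∧ (∀ x, f x = r x + w) ∧ (∀ x, r (x + w) = r x + w)

/-! The linear part `A` of the twist is a linear isometry of order 4 preserving `ℤ³`, so it is a
signed permutation: `A eⱼ = εⱼ e_{σ j}` with `εⱼ = ±1`. As `A⁴ = 1`, `σ` has no 3-cycle and is an
involution; as `A² ≠ 1`, some transposition `j ↔ σ j` of `σ` carries signs with `εⱼ ε_{σ j} = -1`.
Such a pair forces the `j`- and `σ j`-coordinates of every `A`-fixed vector to vanish, so the axis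
`v` lies along the remaining basis vector `eᵢ`, which `A` fixes. Then `A` preserves `i`-th
coordinates, so the rotation part of the twist moves no point in the `eᵢ` direction and the
`i`-th coordinate of `f 0 ∈ ℤ³` is the length of the translation `w ∥ eᵢ`, up to sign. -/

open Function Set
open EuclideanSpace (single)

theorem IsometryEquiv.orderOf_toRealLinearIsometryEquiv {E : Type*} [NormedAddCommGroup E]
    [NormedSpace ℝ E] {r : E ≃ᵢ E} {p : E} (hp : r p = p) :
    orderOf r.toRealLinearIsometryEquiv = orderOf r := by
  set A := r.toRealLinearIsometryEquiv
  have hA (x : E) : r x = p + A (x - p) := by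
    rw [map_sub, toRealLinearIsometryEquiv_apply, toRealLinearIsometryEquiv_apply, hp]
    abel
  have hpow (n : ℕ) (x : E) : (r ^ n) x = p + (A ^ n) (x - p) := by
    induction n generalizing x with
    | zero => simp
    | succ n ih =>
      rw [pow_succ, pow_succ, IsometryEquiv.mul_apply, ih, hA, add_sub_cancel_left]
      rfl
  rw [orderOf_eq_orderOf_iff]
  refine fun n ↦ ⟨fun h ↦ IsometryEquiv.ext fun x ↦ ?_, fun h ↦ LinearIsometryEquiv.ext fun x ↦ ?_⟩
  · rw [hpow, h]
    simp
  · have h' := hpow n (x + p)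
    rw [h, add_sub_cancel_right, add_comm] at h'
    exact (add_left_cancel h').symm

theorem EuclideanSpace.eq_single_of_intCoord_of_norm_eq_one {ι : Type*} [Fintype ι]
    [DecidableEq ι] {u : EuclideanSpace ℝ ι} (hu : ∀ i, ∃ n : ℤ, u i = n) (h1 : ‖u‖ = 1) :
    ∃ i, u = single i (u i) := by
  obtain ⟨i, hi⟩ : ∃ i, u i ≠ 0 := by
    by_contra! h
    have : u = 0 := by ext j; exact h j
    simp [this] at h1
  have hsum : u i ^ 2 + ∑ j ∈ Finset.univ.erase i, u j ^ 2 = 1 := by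
    rw [Finset.add_sum_erase _ (fun j ↦ u j ^ 2) (Finset.mem_univ i), ← Real.sqrt_eq_one, ← h1,
      EuclideanSpace.norm_eq]
    simp
  have hrest_nonneg := Finset.sum_nonneg fun j (_ : j ∈ Finset.univ.erase i) ↦ sq_nonneg (u j)
  have hi1 : 1 ≤ u i ^ 2 := by
    obtain ⟨n, hn : u i = (n : ℝ)⟩ := hu i
    rw [hn] at hi ⊢
    beta_reduce at hi ⊢
    exact_mod_cast (one_le_sq_iff_one_le_abs n).mpr (Int.one_le_abs (mod_cast hi))
  have hzero : ∀ j ≠ i, u j = 0 := fun j hj ↦ pow_eq_zero_iff two_ne_zero |>.mp <|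
    (Finset.sum_eq_zero_iff_of_nonneg fun _ _ ↦ sq_nonneg _).mp (by linarith) j (by simpa)
  refine ⟨i, ?_⟩
  ext j
  by_cases hj : j = i
  · simp [hj]
  · simp [hj, hzero j hj]

theorem EuclideanSpace.apply_eq_mul_of_map_single {ι κ : Type*} [Fintype ι] [Fintype κ]
    [DecidableEq ι] [DecidableEq κ] (A : EuclideanSpace ℝ ι ≃ₗᵢ[ℝ] EuclideanSpace ℝ κ)
    {i : ι} {j : κ} {c : ℝ} (hA : A (single i 1) = single j c) (x : EuclideanSpace ℝ ι) :
    x i = c * A x j := by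
  calc x i = ⟪single i 1, x⟫ := by simp [EuclideanSpace.inner_single_left]
    _ = ⟪A (single i 1), A x⟫ := (A.inner_map_map _ _).symm
    _ = c * A x j := by simp [hA, EuclideanSpace.inner_single_left]

theorem IsometryEquiv.apply_eq_of_map_single_eq_self {ι : Type*} [Fintype ι] [DecidableEq ι]
    {r : EuclideanSpace ℝ ι ≃ᵢ EuclideanSpace ℝ ι} {p : EuclideanSpace ℝ ι} (hp : r p = p) {i : ι}
    (hi : r.toRealLinearIsometryEquiv (single i 1) = single i 1) (x : EuclideanSpace ℝ ι) :
    r x i = x i := by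
  have h := EuclideanSpace.apply_eq_mul_of_map_single _ hi (x - p)
  simp only [map_sub, toRealLinearIsometryEquiv_apply, hp] at h
  simp only [PiLp.sub_apply, one_mul] at h
  linarith

section SignedPermutation

variable {ι : Type*} [Fintype ι] [DecidableEq ι]

def IsSignedPermutation (A : EuclideanSpace ℝ ι ≃ₗᵢ[ℝ] EuclideanSpace ℝ ι) (σ : ι → ι)
    (ε : ι → ℝ) : Prop :=
  ∀ j, A (single j 1) = single (σ j) (ε j)

namespace IsSignedPermutation

variable {A : EuclideanSpace ℝ ι ≃ₗᵢ[ℝ] EuclideanSpace ℝ ι} {σ : ι → ι} {ε : ι → ℝ}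
  (hA : IsSignedPermutation A σ ε)
include hA

theorem apply_eq_mul (x : EuclideanSpace ℝ ι) (j : ι) : x j = ε j * A x (σ j) :=
  EuclideanSpace.apply_eq_mul_of_map_single A (hA j) x

theorem abs_eq_one (j : ι) : |ε j| = 1 := by
  simpa using (congrArg norm (hA j)).symm

theorem exists_apply_eq_mul_pow_apply_iterate (n : ℕ) (j : ι) :
    ∃ c : ℝ, ∀ x, x j = c * (A ^ n) x (σ^[n] j) := by
  induction n generalizing j with
  | zero => exact ⟨1, by simp⟩
  | succ n ih =>
    obtain ⟨c, hc⟩ := ih (σ j)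
    refine ⟨ε j * c, fun x ↦ ?_⟩
    rw [hA.apply_eq_mul, hc, pow_succ, iterate_succ_apply, LinearIsometryEquiv.coe_mul,
      comp_apply, mul_assoc]

theorem iterate_eq_self_of_pow_eq_one {n : ℕ} (hn : A ^ n = 1) (j : ι) : σ^[n] j = j := by
  obtain ⟨c, hc⟩ := hA.exists_apply_eq_mul_pow_apply_iterate n j
  by_contra h
  simpa [hn, h] using hc (single j 1)

theorem exists_mul_ne_one_of_sq_ne_one (hσ : Involutive σ) (h2 : A ^ 2 ≠ 1) :
    ∃ j, ε j * ε (σ j) ≠ 1 := by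
  by_contra! h
  refine h2 (LinearIsometryEquiv.ext fun x ↦ ?_)
  ext k
  change A (A x) k = x k
  rw [hA.apply_eq_mul x, hA.apply_eq_mul (A x), hσ k, ← mul_assoc, h k, one_mul]

theorem apply_eq_mul_apply_of_map_eq_self {v : EuclideanSpace ℝ ι} (hv : A v = v) (j : ι) :
    v j = ε j * v (σ j) :=
  (hA.apply_eq_mul v j).trans (by rw [hv])

theorem apply_eq_zero_of_map_eq_self_of_mul_ne_one (hσ : Involutive σ)
    {v : EuclideanSpace ℝ ι} (hv : A v = v) {j : ι} (hj : ε j * ε (σ j) ≠ 1) : v j = 0 := by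
  have h := hA.apply_eq_mul_apply_of_map_eq_self hv j
  rw [hA.apply_eq_mul_apply_of_map_eq_self hv (σ j), hσ j, ← mul_assoc] at h
  exact (mul_left_eq_self₀.mp h.symm).resolve_left hj

end IsSignedPermutation

end SignedPermutation

theorem involutive_of_iterate_four_fin_three {σ : Fin 3 → Fin 3} (h : ∀ j, σ^[4] j = j) :
    Involutive σ := by
  revert σ
  unfold Involutive
  decide

theorem exists_fixed_third_of_involutive_fin_three {σ : Fin 3 → Fin 3} (hσ : Involutive σ)
    {j : Fin 3} (hj : σ j ≠ j) : ∃ i, σ i = i ∧ ∀ l, l = i ∨ l = j ∨ l = σ j := by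
  revert σ j
  unfold Involutive
  decide

theorem zero_mem_latt : (0 : E3) ∈ latt := fun _ ↦ ⟨0, by simp⟩

theorem single_mem_latt (j : Fin 3) : single j (1 : ℝ) ∈ latt := fun i ↦
  ⟨if i = j then 1 else 0, by by_cases h : i = j <;> simp [h]⟩

theorem sub_mem_latt {x y : E3} (hx : x ∈ latt) (hy : y ∈ latt) : x - y ∈ latt := fun i ↦ by
  obtain ⟨m, hm⟩ := hx i
  obtain ⟨n, hn⟩ := hy i
  exact ⟨m - n, by simp [hm, hn]⟩

theorem LinearIsometryEquiv.exists_isSignedPermutation_of_mapsTo_latt (A : E3 ≃ₗᵢ[ℝ] E3)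
    (hA : MapsTo A latt latt) :
    ∃ (σ : Fin 3 → Fin 3) (ε : Fin 3 → ℝ), IsSignedPermutation A σ ε := by
  choose σ hσ using fun j ↦
    EuclideanSpace.eq_single_of_intCoord_of_norm_eq_one (hA (single_mem_latt j)) (by simp)
  exact ⟨σ, _, hσ⟩

theorem LinearIsometryEquiv.exists_fixed_single_of_orderOf_eq_four (A : E3 ≃ₗᵢ[ℝ] E3)
    (hA : MapsTo A latt latt) (h4 : orderOf A = 4) {v : E3} (hv : A v = v) (hv0 : v ≠ 0) :
    ∃ i, A (single i 1) = single i 1 ∧ v = v i • single i 1 := by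
  obtain ⟨σ, ε, hσε⟩ := A.exists_isSignedPermutation_of_mapsTo_latt hA
  have hσ : Involutive σ := involutive_of_iterate_four_fin_three
    (hσε.iterate_eq_self_of_pow_eq_one (h4 ▸ pow_orderOf_eq_one A))
  obtain ⟨j, hj⟩ := hσε.exists_mul_ne_one_of_sq_ne_one hσ fun h2 ↦ by
    simpa [h4] using orderOf_dvd_of_pow_eq_one h2
  have hσj : σ j ≠ j := fun h ↦ hj (by rw [h, ← abs_mul_abs_self, hσε.abs_eq_one, one_mul])
  obtain ⟨i, hσi, hcover⟩ := exists_fixed_third_of_involutive_fin_three hσ hσj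
  have hji : j ≠ i := fun h ↦ hσj (h ▸ hσi)
  have hσji : σ j ≠ i := fun h ↦ hji (by rw [← hσ j, h, hσi])
  have hvj : v j = 0 := hσε.apply_eq_zero_of_map_eq_self_of_mul_ne_one hσ hv hj
  have hvσj : v (σ j) = 0 := by
    rw [hσε.apply_eq_mul_apply_of_map_eq_self hv (σ j), hσ j, hvj, mul_zero]
  have hvi : v i ≠ 0 := fun h ↦ hv0 <| by
    ext l
    rcases hcover l with rfl | rfl | rfl <;> simp [h, hvj, hvσj]
  have hεi : ε i = 1 := by
    have h := hσε.apply_eq_mul_apply_of_map_eq_self hv i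
    rw [hσi] at h
    exact (mul_left_eq_self₀.mp h.symm).resolve_right hvi
  refine ⟨i, by rw [hσε, hσi, hεi], ?_⟩
  ext l
  rcases hcover l with rfl | rfl | rfl <;> simp [hvj, hvσj, hji, hσji]

/-- A 4-fold twist preserving the cubic tessellation has its axis parallel to a coordinate
axis, and the norm of its translational component is a positive integer. -/
theorem stmt3 (f : E3 ≃ᵢ E3) (p v w : E3)
    (hl : PreservesLatt f) (ht : IsTwist f p v w 4) :
    (∃ (i : Fin 3) (s : ℝ), s ≠ 0 ∧ v = s • EuclideanSpace.single i (1:ℝ)) ∧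
    (∃ k : ℕ, 0 < k ∧ ‖w‖ = (k : ℝ)) := by
  obtain ⟨-, hw0, ⟨s, rfl⟩, r, ⟨hv0, hfix, hord⟩, hfr, -⟩ := ht
  set A := f.toRealLinearIsometryEquiv
  have hAr : A = r.toRealLinearIsometryEquiv := by
    ext x
    simp [A, hfr]
  have hrp : r p = p := by simpa using hfix 0
  have hf0 : f 0 ∈ latt := (hl 0).1 zero_mem_latt
  have hA : MapsTo A latt latt := fun x hx ↦ by
    simpa [A] using sub_mem_latt ((hl x).1 hx) hf0
  have hrv : r (p + v) = p + v := by simpa using hfix 1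
  have hAv : A v = v := by simpa [hAr, hrv, hrp] using map_sub A (p + v) p
  obtain ⟨i, hAi, hvi⟩ := A.exists_fixed_single_of_orderOf_eq_four hA
    (by rw [hAr, IsometryEquiv.orderOf_toRealLinearIsometryEquiv hrp, hord]) hAv hv0
  have hr0i : r 0 i = 0 := r.apply_eq_of_map_single_eq_self hrp (hAr ▸ hAi) 0
  obtain ⟨n, hn⟩ := hf0 i
  have hwi : s * v i = n := by simpa [hfr, hr0i] using hn
  have hw : s • v = (n : ℝ) • single i 1 := by rw [hvi, smul_smul, ← hwi]
  refine ⟨⟨i, v i, fun h ↦ hv0 (by rw [hvi, h, zero_smul]), hvi⟩, n.natAbs, ?_, ?_⟩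
  · refine Int.natAbs_pos.mpr fun hn0 ↦ hw0 ?_
    rw [hw, hn0, Int.cast_zero, zero_smul]
  · rw [hw, norm_smul, PiLp.norm_single, norm_one, mul_one, Real.norm_eq_abs,
      Nat.cast_natAbs, Int.cast_abs]
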